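/- In QHC, ⊢ ∇(!p ∧ !q) ↔ !p ∧ !q, ⊢ ∇(!p → !q) ↔ (!p → !q), ⊢ □(?α ∧ ?β) ↔ ?α ∧ ?β, and ⊢ □(?α ∨ ?β) ↔ ?α ∨ ?β, where ∇γ := !?γ and □r := ?!r. -/

import Mathlib

/- Problem (intuitionistic) formulas and proposition (classical) formulas of QHC. -/
mutual
inductive PF : Type
  | var : Nat → PF
  | bot : PF
  | and : PF → PF → PF
  | or : PF → PF → PF
  | imp : PF → PF → PF
  | bang : CF → PF
inductive CF : Type
  | var : Nat → CF
  | fls : CF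
  | and : CF → CF → CF
  | or : CF → CF → CF
  | imp : CF → CF → CF
  | quest : PF → CF
end

def PF.neg (α : PF) : PF := α.imp PF.bot
def CF.neg (p : CF) : CF := p.imp CF.fls
def PF.iff (α β : PF) : PF := (α.imp β).and (β.imp α)
def CF.iff (p q : CF) : CF := (p.imp q).and (q.imp p)
def CF.box (p : CF) : CF := CF.quest (PF.bang p)
def PF.nabla (α : PF) : PF := PF.bang (CF.quest α)

/- Derivability in QHC, parameterized by a set `Ax` of extra problem axioms
(used to treat the axiom ¬!0 and its variants uniformly). Intuitionistic logic
on problems, classical logic on propositions, the rules α ⊢ ?α and p ⊢ !p, and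
the mixed axioms ?!p → p, α → !?α, !(p→q) → (!p → !q), ?(α→β) → (?α → ?β). -/
mutual
inductive ProvP (Ax : PF → Prop) : PF → Prop
  | axm {α} : Ax α → ProvP Ax α
  | mp {α β} : ProvP Ax (α.imp β) → ProvP Ax α → ProvP Ax β
  | ak (α β : PF) : ProvP Ax (α.imp (β.imp α))
  | as (α β γ : PF) : ProvP Ax ((α.imp (β.imp γ)).imp ((α.imp β).imp (α.imp γ)))
  | andI (α β : PF) : ProvP Ax (α.imp (β.imp (α.and β)))
  | andE1 (α β : PF) : ProvP Ax ((α.and β).imp α)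
  | andE2 (α β : PF) : ProvP Ax ((α.and β).imp β)
  | orI1 (α β : PF) : ProvP Ax (α.imp (α.or β))
  | orI2 (α β : PF) : ProvP Ax (β.imp (α.or β))
  | orE (α β γ : PF) : ProvP Ax ((α.imp γ).imp ((β.imp γ).imp ((α.or β).imp γ)))
  | exf (α : PF) : ProvP Ax (PF.bot.imp α)
  | bangIntro {p} : ProvC Ax p → ProvP Ax (PF.bang p)
  | bangImp (p q : CF) : ProvP Ax ((PF.bang (p.imp q)).imp ((PF.bang p).imp (PF.bang q)))
  | bangQuest (α : PF) : ProvP Ax (α.imp (PF.bang (CF.quest α)))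
inductive ProvC (Ax : PF → Prop) : CF → Prop
  | mp {p q} : ProvC Ax (p.imp q) → ProvC Ax p → ProvC Ax q
  | ak (p q : CF) : ProvC Ax (p.imp (q.imp p))
  | as (p q r : CF) : ProvC Ax ((p.imp (q.imp r)).imp ((p.imp q).imp (p.imp r)))
  | andI (p q : CF) : ProvC Ax (p.imp (q.imp (p.and q)))
  | andE1 (p q : CF) : ProvC Ax ((p.and q).imp p)
  | andE2 (p q : CF) : ProvC Ax ((p.and q).imp q)
  | orI1 (p q : CF) : ProvC Ax (p.imp (p.or q))
  | orI2 (p q : CF) : ProvC Ax (q.imp (p.or q))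
  | orE (p q r : CF) : ProvC Ax ((p.imp r).imp ((q.imp r).imp ((p.or q).imp r)))
  | exf (p : CF) : ProvC Ax (CF.fls.imp p)
  | lem (p : CF) : ProvC Ax (p.or (p.imp CF.fls))
  | questIntro {α} : ProvP Ax α → ProvC Ax (CF.quest α)
  | questImp (α β : PF) : ProvC Ax ((CF.quest (α.imp β)).imp ((CF.quest α).imp (CF.quest β)))
  | questBang (p : CF) : ProvC Ax ((CF.quest (PF.bang p)).imp p)
end

/-- The axiom (!⊥): ¬!0. -/
def QHCAx : PF → Prop := fun α => α = (PF.bang CF.fls).imp PF.bot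

/-- Derivability of a problem in QHC. -/
def PrvP (α : PF) : Prop := ProvP QHCAx α
/-- Derivability of a proposition in QHC. -/
def PrvC (p : CF) : Prop := ProvC QHCAx p

/-!
`∇ = !?` and `□ = ?!` are normal modalities: both are monotone, `∇` distributes over `→` and `□`
over `∧`. As `α → ∇α` and `□p → p` always hold, each equivalence reduces to one implication.
Formulas `!p` satisfy `∇!p → !p` because `?!p → p`, and formulas `?α` satisfy `?α → □?α` because
`α → !?α`; normality then shows that these fixed points of `∇` are closed under `∧` and `γ → -`,
and those of `□` under `∧` and `∨`.
-/

variable {Ax : PF → Prop}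

namespace ProvP

theorem weaken {α β : PF} (h : ProvP Ax β) : ProvP Ax (α.imp β) :=
  mp (ak _ _) h

theorem imp_mp {α β γ : PF} (h₁ : ProvP Ax (α.imp (β.imp γ))) (h₂ : ProvP Ax (α.imp β)) :
    ProvP Ax (α.imp γ) :=
  mp (mp (as _ _ _) h₁) h₂

theorem imp_trans {α β γ : PF} (h₁ : ProvP Ax (α.imp β)) (h₂ : ProvP Ax (β.imp γ)) :
    ProvP Ax (α.imp γ) :=
  imp_mp (weaken h₂) h₁

theorem imp_postcomp {α β γ : PF} (h : ProvP Ax (β.imp γ)) :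
    ProvP Ax ((α.imp β).imp (α.imp γ)) :=
  mp (as _ _ _) (weaken h)

theorem imp_precomp {β γ δ : PF} (h : ProvP Ax (δ.imp β)) :
    ProvP Ax ((β.imp γ).imp (δ.imp γ)) :=
  imp_mp ((ak (β.imp γ) δ).imp_trans (as δ β γ)) (weaken h)

theorem imp_and_intro {α β γ : PF} (h₁ : ProvP Ax (α.imp β)) (h₂ : ProvP Ax (α.imp γ)) :
    ProvP Ax (α.imp (β.and γ)) :=
  imp_mp (h₁.imp_trans (andI β γ)) h₂

theorem iff_intro {α β : PF} (h₁ : ProvP Ax (α.imp β)) (h₂ : ProvP Ax (β.imp α)) :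
    ProvP Ax (α.iff β) :=
  mp (mp (andI _ _) h₁) h₂

end ProvP

namespace ProvC

theorem weaken {p q : CF} (h : ProvC Ax q) : ProvC Ax (p.imp q) :=
  mp (ak _ _) h

theorem imp_mp {p q r : CF} (h₁ : ProvC Ax (p.imp (q.imp r))) (h₂ : ProvC Ax (p.imp q)) :
    ProvC Ax (p.imp r) :=
  mp (mp (as _ _ _) h₁) h₂

theorem imp_trans {p q r : CF} (h₁ : ProvC Ax (p.imp q)) (h₂ : ProvC Ax (q.imp r)) :
    ProvC Ax (p.imp r) :=
  imp_mp (weaken h₂) h₁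

theorem iff_intro {p q : CF} (h₁ : ProvC Ax (p.imp q)) (h₂ : ProvC Ax (q.imp p)) :
    ProvC Ax (p.iff q) :=
  mp (mp (andI _ _) h₁) h₂

end ProvC

theorem ProvP.bang_mono {p q : CF} (h : ProvC Ax (p.imp q)) :
    ProvP Ax ((PF.bang p).imp (PF.bang q)) :=
  mp (bangImp p q) (bangIntro h)

theorem ProvC.quest_mono {α β : PF} (h : ProvP Ax (α.imp β)) :
    ProvC Ax ((CF.quest α).imp (CF.quest β)) :=
  mp (questImp α β) (questIntro h)

theorem ProvP.nabla_mono {α β : PF} (h : ProvP Ax (α.imp β)) :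
    ProvP Ax (α.nabla.imp β.nabla) :=
  bang_mono (ProvC.quest_mono h)

theorem ProvC.box_mono {p q : CF} (h : ProvC Ax (p.imp q)) :
    ProvC Ax (p.box.imp q.box) :=
  quest_mono (ProvP.bang_mono h)

theorem ProvP.nabla_imp_distrib (α β : PF) :
    ProvP Ax ((α.imp β).nabla.imp (α.nabla.imp β.nabla)) :=
  (bang_mono (ProvC.questImp α β)).imp_trans (bangImp _ _)

theorem ProvP.bang_and (p q : CF) :
    ProvP Ax ((PF.bang p).imp ((PF.bang q).imp (PF.bang (p.and q)))) :=
  (bang_mono (ProvC.andI p q)).imp_trans (bangImp q (p.and q))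

theorem ProvC.box_and (p q : CF) :
    ProvC Ax (p.box.imp (q.box.imp (p.and q).box)) :=
  (quest_mono (ProvP.bang_and p q)).imp_trans (questImp _ _)

def PF.NablaFixed (Ax : PF → Prop) (α : PF) : Prop := ProvP Ax (α.nabla.imp α)

def CF.BoxFixed (Ax : PF → Prop) (p : CF) : Prop := ProvC Ax (p.imp p.box)

namespace PF.NablaFixed

theorem nabla_iff {α : PF} (h : NablaFixed Ax α) : ProvP Ax (α.nabla.iff α) :=
  ProvP.iff_intro h (ProvP.bangQuest α)

theorem bang (p : CF) : NablaFixed Ax (PF.bang p) :=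
  ProvP.bang_mono (ProvC.questBang p)

theorem and {α β : PF} (hα : NablaFixed Ax α) (hβ : NablaFixed Ax β) :
    NablaFixed Ax (α.and β) :=
  ProvP.imp_and_intro ((ProvP.nabla_mono (ProvP.andE1 α β)).imp_trans hα)
    ((ProvP.nabla_mono (ProvP.andE2 α β)).imp_trans hβ)

theorem imp (α : PF) {β : PF} (hβ : NablaFixed Ax β) : NablaFixed Ax (α.imp β) :=
  (ProvP.nabla_imp_distrib α β).imp_trans <|
    (ProvP.imp_precomp (ProvP.bangQuest α)).imp_trans (ProvP.imp_postcomp hβ)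

end PF.NablaFixed

namespace CF.BoxFixed

theorem box_iff {p : CF} (h : BoxFixed Ax p) : ProvC Ax (p.box.iff p) :=
  ProvC.iff_intro (ProvC.questBang p) h

theorem quest (α : PF) : BoxFixed Ax (CF.quest α) :=
  ProvC.quest_mono (ProvP.bangQuest α)

theorem and {p q : CF} (hp : BoxFixed Ax p) (hq : BoxFixed Ax q) : BoxFixed Ax (p.and q) :=
  ProvC.imp_mp (((ProvC.andE1 p q).imp_trans hp).imp_trans (ProvC.box_and p q))
    ((ProvC.andE2 p q).imp_trans hq)

theorem or {p q : CF} (hp : BoxFixed Ax p) (hq : BoxFixed Ax q) : BoxFixed Ax (p.or q) :=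
  ProvC.mp (ProvC.mp (ProvC.orE _ _ _) (hp.imp_trans (ProvC.box_mono (ProvC.orI1 p q))))
    (hq.imp_trans (ProvC.box_mono (ProvC.orI2 p q)))

end CF.BoxFixed

theorem qhc_fixed_points :
    (∀ p q : CF, PrvP (PF.iff (PF.nabla ((PF.bang p).and (PF.bang q)))
      ((PF.bang p).and (PF.bang q)))) ∧
    (∀ p q : CF, PrvP (PF.iff (PF.nabla ((PF.bang p).imp (PF.bang q)))
      ((PF.bang p).imp (PF.bang q)))) ∧
    (∀ α β : PF, PrvC (CF.iff (CF.box ((CF.quest α).and (CF.quest β)))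
      ((CF.quest α).and (CF.quest β)))) ∧
    (∀ α β : PF, PrvC (CF.iff (CF.box ((CF.quest α).or (CF.quest β)))
      ((CF.quest α).or (CF.quest β)))) := by
  exact ⟨fun p q => ((PF.NablaFixed.bang p).and (PF.NablaFixed.bang q)).nabla_iff,
    fun p q => ((PF.NablaFixed.bang q).imp (PF.bang p)).nabla_iff,
    fun α β => ((CF.BoxFixed.quest α).and (CF.BoxFixed.quest β)).box_iff,
    fun α β => ((CF.BoxFixed.quest α).or (CF.BoxFixed.quest β)).box_iff⟩
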